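/- Let (X, μ) be a σ-finite measure space, let G : X × X → ℝ be measurable, symmetric (G(z,w) = G(w,z)) and nonnegative, and let A₁, A₂ : X → ℂ be measurable functions such that G(z,w)·|A_i(w)|·|A_j(w)|·|A_k(z)|·|A_l(z)| is integrable on X × X for all choices of indices i,j,k,l ∈ {1,2}. Set I = ∫∫ G(z,w) |A₁(w)|² |A₂(z)|² dμ(w) dμ(z) and J = ∫∫ G(z,w) A₁(w) conj(A₂(w)) A₂(z) conj(A₁(z)) dμ(w) dμ(z). Then I − J = (1/2) ∫∫ G(z,w) |A₁(z)A₂(w) − A₁(w)A₂(z)|² dμ(w) dμ(z); in particular I ≥ Re(J), and equality holds if and only if A₁(z)A₂(w) = A₁(w)A₂(z) for μ ⊗ μ-almost every pair (z,w) with G(z,w) > 0. -/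

import Mathlib

open MeasureTheory

/-- Let `G : X × X → ℝ` be a symmetric, nonnegative, measurable kernel and
`A₁, A₂ : X → ℂ` measurable, with the dominating integrability condition that
`G(z,w)|A_i(w)||A_j(w)||A_k(z)||A_l(z)|` is integrable for all `i,j,k,l ∈ {1,2}`.
Set `I = ∫∫ G(z,w)|A₁(w)|²|A₂(z)|²` and
`J = ∫∫ G(z,w) A₁(w) conj(A₂(w)) A₂(z) conj(A₁(z))`. Then
`I − J = (1/2) ∫∫ G(z,w) |A₁(z)A₂(w) − A₁(w)A₂(z)|²`; in particular `Re J ≤ I`,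
with equality iff `A₁(z)A₂(w) = A₁(w)A₂(z)` for `μ ⊗ μ`-a.e. pair `(z,w)` with
`G(z,w) > 0`. -/
theorem symmetric_nonneg_kernel_inequality
    {X : Type*} [MeasurableSpace X] (μ : Measure X) [SigmaFinite μ]
    (G : X → X → ℝ) (A₁ A₂ : X → ℂ)
    (hG : Measurable (fun p : X × X => G p.1 p.2))
    (hGsymm : ∀ z w, G z w = G w z)
    (hGnonneg : ∀ z w, 0 ≤ G z w)
    (hA₁ : Measurable A₁) (hA₂ : Measurable A₂)
    (hint : ∀ f₁ f₂ f₃ f₄ : X → ℂ, f₁ ∈ ({A₁, A₂} : Set (X → ℂ)) →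
      f₂ ∈ ({A₁, A₂} : Set (X → ℂ)) → f₃ ∈ ({A₁, A₂} : Set (X → ℂ)) →
      f₄ ∈ ({A₁, A₂} : Set (X → ℂ)) →
      Integrable (fun p : X × X =>
        G p.1 p.2 * ‖f₁ p.2‖ * ‖f₂ p.2‖
          * ‖f₃ p.1‖ * ‖f₄ p.1‖) (μ.prod μ)) :
    ((∫ z, ∫ w, G z w * (‖A₁ w‖) ^ 2 * (‖A₂ z‖) ^ 2 ∂μ ∂μ : ℝ) : ℂ)
        - (∫ z, ∫ w, (G z w : ℂ) * A₁ w * (starRingEnd ℂ) (A₂ w)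
            * A₂ z * (starRingEnd ℂ) (A₁ z) ∂μ ∂μ)
      = (1 / 2 : ℂ) *
          ((∫ z, ∫ w, G z w * (‖A₁ z * A₂ w - A₁ w * A₂ z‖) ^ 2 ∂μ ∂μ : ℝ) : ℂ) ∧
    (∫ z, ∫ w, (G z w : ℂ) * A₁ w * (starRingEnd ℂ) (A₂ w)
        * A₂ z * (starRingEnd ℂ) (A₁ z) ∂μ ∂μ).re
      ≤ (∫ z, ∫ w, G z w * (‖A₁ w‖) ^ 2 * (‖A₂ z‖) ^ 2 ∂μ ∂μ : ℝ) ∧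
    ((∫ z, ∫ w, G z w * (‖A₁ w‖) ^ 2 * (‖A₂ z‖) ^ 2 ∂μ ∂μ : ℝ)
        = (∫ z, ∫ w, (G z w : ℂ) * A₁ w * (starRingEnd ℂ) (A₂ w)
            * A₂ z * (starRingEnd ℂ) (A₁ z) ∂μ ∂μ).re
      ↔ ∀ᵐ p : X × X ∂(μ.prod μ), 0 < G p.1 p.2 →
          A₁ p.1 * A₂ p.2 = A₁ p.2 * A₂ p.1) := by
  classical
  have memA₁ : A₁ ∈ ({A₁, A₂} : Set (X → ℂ)) := Or.inl rfl
  have memA₂ : A₂ ∈ ({A₁, A₂} : Set (X → ℂ)) := Or.inr rfl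
  -- complex-valued kernel and the basic products
  set Gc : X × X → ℂ := fun p => (G p.1 p.2 : ℂ) with hGc
  set a : X × X → ℂ := fun p => A₁ p.1 * A₂ p.2 with hadef
  set b : X × X → ℂ := fun p => A₁ p.2 * A₂ p.1 with hbdef
  set Fa : X × X → ℂ := fun p => Gc p * a p * (starRingEnd ℂ) (a p) with hFadef
  set Fb : X × X → ℂ := fun p => Gc p * b p * (starRingEnd ℂ) (b p) with hFbdef
  set Fab : X × X → ℂ := fun p => Gc p * a p * (starRingEnd ℂ) (b p) with hFabdef
  set Fba : X × X → ℂ := fun p => Gc p * b p * (starRingEnd ℂ) (a p) with hFbadef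
  set Ir : X × X → ℝ :=
    fun p => G p.1 p.2 * (‖A₁ p.2‖) ^ 2 * (‖A₂ p.1‖) ^ 2 with hIrdef
  set Jc : X × X → ℂ := fun p => (G p.1 p.2 : ℂ) * A₁ p.2 * (starRingEnd ℂ) (A₂ p.2)
    * A₂ p.1 * (starRingEnd ℂ) (A₁ p.1) with hJcdef
  set Kr : X × X → ℝ := fun p => G p.1 p.2 * (‖a p - b p‖) ^ 2 with hKrdef
  -- measurability
  have hGcm : Measurable Gc := Complex.measurable_ofReal.comp hG
  have ham : Measurable a := (hA₁.comp measurable_fst).mul (hA₂.comp measurable_snd)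
  have hbm : Measurable b := (hA₁.comp measurable_snd).mul (hA₂.comp measurable_fst)
  have hconj : ∀ f : X × X → ℂ, Measurable f → Measurable fun p => (starRingEnd ℂ) (f p) :=
    fun f hf => Complex.continuous_conj.measurable.comp hf
  -- generic integrability bound
  have hbound : ∀ (F : X × X → ℂ) (f₁ f₂ f₃ f₄ : X → ℂ),
      f₁ ∈ ({A₁, A₂} : Set (X → ℂ)) → f₂ ∈ ({A₁, A₂} : Set (X → ℂ)) →
      f₃ ∈ ({A₁, A₂} : Set (X → ℂ)) → f₄ ∈ ({A₁, A₂} : Set (X → ℂ)) →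
      Measurable F →
      (∀ p : X × X, ‖F p‖ ≤ G p.1 p.2 * ‖f₁ p.2‖ * ‖f₂ p.2‖
        * ‖f₃ p.1‖ * ‖f₄ p.1‖) →
      Integrable F (μ.prod μ) := fun F f₁ f₂ f₃ f₄ h1 h2 h3 h4 hFm hle =>
    (hint f₁ f₂ f₃ f₄ h1 h2 h3 h4).mono' hFm.aestronglyMeasurable
      (Filter.Eventually.of_forall hle)
  have hFa_int : Integrable Fa (μ.prod μ) := by
    refine hbound Fa A₂ A₂ A₁ A₁ memA₂ memA₂ memA₁ memA₁
      ((hGcm.mul ham).mul (hconj a ham)) fun p => le_of_eq ?_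
    simp only [hFadef, hGc, hadef, norm_mul, Complex.norm_conj,
      Complex.norm_real, Real.norm_eq_abs, abs_of_nonneg (hGnonneg p.1 p.2), map_mul]
    ring
  have hFb_int : Integrable Fb (μ.prod μ) := by
    refine hbound Fb A₁ A₁ A₂ A₂ memA₁ memA₁ memA₂ memA₂
      ((hGcm.mul hbm).mul (hconj b hbm)) fun p => le_of_eq ?_
    simp only [hFbdef, hGc, hbdef, norm_mul, Complex.norm_conj,
      Complex.norm_real, Real.norm_eq_abs, abs_of_nonneg (hGnonneg p.1 p.2), map_mul]
    ring
  have hFab_int : Integrable Fab (μ.prod μ) := by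
    refine hbound Fab A₁ A₂ A₁ A₂ memA₁ memA₂ memA₁ memA₂
      ((hGcm.mul ham).mul (hconj b hbm)) fun p => le_of_eq ?_
    simp only [hFabdef, hGc, hadef, hbdef, norm_mul, Complex.norm_conj,
      Complex.norm_real, Real.norm_eq_abs, abs_of_nonneg (hGnonneg p.1 p.2), map_mul]
    ring
  have hFba_int : Integrable Fba (μ.prod μ) := by
    refine hbound Fba A₁ A₂ A₁ A₂ memA₁ memA₂ memA₁ memA₂
      ((hGcm.mul hbm).mul (hconj a ham)) fun p => le_of_eq ?_
    simp only [hFbadef, hGc, hadef, hbdef, norm_mul, Complex.norm_conj,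
      Complex.norm_real, Real.norm_eq_abs, abs_of_nonneg (hGnonneg p.1 p.2), map_mul]
    ring
  have hJc_int : Integrable Jc (μ.prod μ) := by
    refine hbound Jc A₁ A₂ A₂ A₁ memA₁ memA₂ memA₂ memA₁
      (((((hGcm.mul (hA₁.comp measurable_snd)).mul
        (hconj _ (hA₂.comp measurable_snd))).mul (hA₂.comp measurable_fst)).mul
        (hconj _ (hA₁.comp measurable_fst)))) fun p => le_of_eq ?_
    simp only [hJcdef, norm_mul, Complex.norm_conj,
      Complex.norm_real, Real.norm_eq_abs, abs_of_nonneg (hGnonneg p.1 p.2)]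
  have hIr_int : Integrable Ir (μ.prod μ) := by
    refine (hint A₁ A₁ A₂ A₂ memA₁ memA₁ memA₂ memA₂).congr
      (Filter.Eventually.of_forall fun p => ?_)
    simp only [hIrdef]
    ring
  -- the pointwise expansion of the square
  have hpt : ∀ p : X × X, ((Kr p : ℝ) : ℂ) = Fa p + Fb p - Fab p - Fba p := by
    intro p
    have h2 : ((‖a p - b p‖ ^ 2 : ℝ) : ℂ)
        = (a p - b p) * (starRingEnd ℂ) (a p - b p) := by
      rw [Complex.sq_norm, Complex.mul_conj]
    simp only [hKrdef, Complex.ofReal_mul, h2, hFadef, hFbdef, hFabdef, hFbadef, hGc]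
    rw [map_sub]
    ring
  have hKc_int : Integrable (fun p => ((Kr p : ℝ) : ℂ)) (μ.prod μ) :=
    (((hFa_int.add hFb_int).sub hFab_int).sub hFba_int).congr
      (Filter.Eventually.of_forall fun p => (hpt p).symm)
  have hKr_int : Integrable Kr (μ.prod μ) :=
    hKc_int.re.congr (Filter.Eventually.of_forall fun p => by simp)
  -- swap symmetry
  have hswap : ∀ (F F' : X × X → ℂ), (∀ p : X × X, F' p = F (p.2, p.1)) →
      ∫ p, F' p ∂(μ.prod μ) = ∫ p, F p ∂(μ.prod μ) := by
    intro F F' h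
    calc ∫ p, F' p ∂(μ.prod μ) = ∫ p : X × X, F p.swap ∂(μ.prod μ) :=
          integral_congr_ae (Filter.Eventually.of_forall fun p => h p)
      _ = ∫ p, F p ∂(μ.prod μ) := integral_prod_swap F
  have hab : ∫ p, Fb p ∂(μ.prod μ) = ∫ p, Fa p ∂(μ.prod μ) := by
    refine hswap Fa Fb fun p => ?_
    simp only [hFadef, hFbdef, hGc, hadef, hbdef]
    rw [hGsymm p.1 p.2]
  have hba : ∫ p, Fba p ∂(μ.prod μ) = ∫ p, Fab p ∂(μ.prod μ) := by
    refine hswap Fab Fba fun p => ?_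
    simp only [hFabdef, hFbadef, hGc, hadef, hbdef]
    rw [hGsymm p.1 p.2]
  -- integral identities
  have hKint_eq : ∫ p, ((Kr p : ℝ) : ℂ) ∂(μ.prod μ)
      = (∫ p, Fa p ∂(μ.prod μ)) + (∫ p, Fb p ∂(μ.prod μ))
        - (∫ p, Fab p ∂(μ.prod μ)) - (∫ p, Fba p ∂(μ.prod μ)) := by
    have h1 : Integrable (fun p : X × X => Fa p + Fb p) (μ.prod μ) := hFa_int.add hFb_int
    have h2 : Integrable (fun p : X × X => Fa p + Fb p - Fab p) (μ.prod μ) := h1.sub hFab_int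
    rw [integral_congr_ae (Filter.Eventually.of_forall hpt), integral_sub h2 hFba_int,
      integral_sub h1 hFab_int, integral_add hFa_int hFb_int]
  have hIcast : ∫ p, ((Ir p : ℝ) : ℂ) ∂(μ.prod μ) = ((∫ p, Ir p ∂(μ.prod μ) : ℝ) : ℂ) :=
    integral_ofReal
  have hKcast : ∫ p, ((Kr p : ℝ) : ℂ) ∂(μ.prod μ) = ((∫ p, Kr p ∂(μ.prod μ) : ℝ) : ℂ) :=
    integral_ofReal
  have hI2 : ((∫ p, Ir p ∂(μ.prod μ) : ℝ) : ℂ) = ∫ p, Fb p ∂(μ.prod μ) := by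
    rw [← hIcast]
    refine integral_congr_ae (Filter.Eventually.of_forall fun p => ?_)
    have hcc : (A₁ p.2 * A₂ p.1) * (starRingEnd ℂ) (A₁ p.2 * A₂ p.1)
        = (((‖A₁ p.2‖) ^ 2 : ℝ) : ℂ) * (((‖A₂ p.1‖) ^ 2 : ℝ) : ℂ) := by
      rw [Complex.mul_conj, Complex.normSq_mul]
      push_cast [Complex.normSq_eq_norm_sq]
      ring
    simp only [hIrdef, hFbdef, hGc, hbdef]
    push_cast at hcc ⊢
    linear_combination (-((G p.1 p.2 : ℝ) : ℂ)) * hcc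
  have hJ2 : ∫ p, Jc p ∂(μ.prod μ) = ∫ p, Fba p ∂(μ.prod μ) := by
    refine integral_congr_ae (Filter.Eventually.of_forall fun p => ?_)
    simp only [hJcdef, hFbadef, hGc, hadef, hbdef, map_mul]
    ring
  -- iterated integrals to product integrals
  have hIiter : (∫ z, ∫ w, G z w * (‖A₁ w‖) ^ 2 * (‖A₂ z‖) ^ 2 ∂μ ∂μ)
      = ∫ p, Ir p ∂(μ.prod μ) := integral_integral hIr_int
  have hJiter : (∫ z, ∫ w, (G z w : ℂ) * A₁ w * (starRingEnd ℂ) (A₂ w)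
      * A₂ z * (starRingEnd ℂ) (A₁ z) ∂μ ∂μ) = ∫ p, Jc p ∂(μ.prod μ) :=
    integral_integral hJc_int
  have hKiter : (∫ z, ∫ w, G z w * (‖A₁ z * A₂ w - A₁ w * A₂ z‖) ^ 2 ∂μ ∂μ)
      = ∫ p, Kr p ∂(μ.prod μ) := integral_integral hKr_int
  rw [hIiter, hJiter, hKiter]
  -- the main identity
  have hmain : ((∫ p, Ir p ∂(μ.prod μ) : ℝ) : ℂ) - ∫ p, Jc p ∂(μ.prod μ)
      = (1 / 2 : ℂ) * ((∫ p, Kr p ∂(μ.prod μ) : ℝ) : ℂ) := by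
    rw [hI2, hJ2, ← hKcast, hKint_eq, hab, hba]
    ring
  have hKnn : 0 ≤ ∫ p, Kr p ∂(μ.prod μ) :=
    integral_nonneg fun p => mul_nonneg (hGnonneg p.1 p.2) (sq_nonneg _)
  have hJre : (∫ p, Jc p ∂(μ.prod μ)).re
      = (∫ p, Ir p ∂(μ.prod μ)) - (∫ p, Kr p ∂(μ.prod μ)) / 2 := by
    have hJval : ∫ p, Jc p ∂(μ.prod μ)
        = (((∫ p, Ir p ∂(μ.prod μ)) - (∫ p, Kr p ∂(μ.prod μ)) / 2 : ℝ) : ℂ) := by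
      have := hmain
      push_cast at this ⊢
      linear_combination -this
    rw [hJval, Complex.ofReal_re]
  have hKzero : (∫ p, Kr p ∂(μ.prod μ)) = 0 ↔ Kr =ᵐ[μ.prod μ] 0 :=
    integral_eq_zero_iff_of_nonneg (fun p => mul_nonneg (hGnonneg p.1 p.2) (sq_nonneg _)) hKr_int
  have hcond : (Kr =ᵐ[μ.prod μ] 0) ↔ ∀ᵐ p : X × X ∂(μ.prod μ), 0 < G p.1 p.2 →
      A₁ p.1 * A₂ p.2 = A₁ p.2 * A₂ p.1 := by
    constructor
    · intro h
      filter_upwards [h] with p hp hGp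
      have hp' : G p.1 p.2 * (‖a p - b p‖) ^ 2 = 0 := hp
      have h0 : (‖a p - b p‖) ^ 2 = 0 := by
        rcases mul_eq_zero.mp hp' with h' | h'
        · exact absurd h' (ne_of_gt hGp)
        · exact h'
      have habs0 : ‖a p - b p‖ = 0 := by
        exact pow_eq_zero_iff two_ne_zero |>.mp h0
      have hD : a p = b p := by simpa [sub_eq_zero] using habs0
      exact hD
    · intro h
      filter_upwards [h] with p hp
      show Kr p = 0
      rcases (hGnonneg p.1 p.2).lt_or_eq with hlt | heq
      · have hD : a p - b p = 0 := sub_eq_zero.mpr (hp hlt)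
        simp [hKrdef, hD]
      · simp [hKrdef, ← heq]
  refine ⟨hmain, by linarith [hJre, hKnn], ?_⟩
  rw [hJre]
  constructor
  · intro h
    exact hcond.mp (hKzero.mp (by linarith))
  · intro h
    have := hKzero.mpr (hcond.mpr h)
    linarith
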